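/- Let J, J_π: X → R with J_π(x) ≥ 0, J(x) ≥ 0 for all x, and suppose there exist η > 0, β > 0 such that J_π(x) + η ≤ (1+β)(J_ε(x) + η) for all x, where J_ε(x) ≥ J(x) and J_ε(x) − J(x) ≤ Lε with η > Lε > 0. Then sup_x (J_π(x) − J(x))/(J(x) + η) ≤ (βη + Lε)/(η − Lε). -/

import Mathlib

/-!
Writing the relative gap as `(Jπ x + η) / (J x + η) - 1`, the hypothesis bounds the numerator by
`(1 + β) (Jε x + η)`, and since `Jε x ≤ J x + L ε` with `J x ≥ 0`, the ratio
`(Jε x + η) / (J x + η)` is at most `η / (η - L ε)`. Hence the gap is at most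
`(1 + β) η / (η - L ε) - 1 = (β η + L ε) / (η - L ε)`.
-/

theorem add_div_add_le_div_sub {b c δ η : ℝ} (hb : 0 ≤ b) (hcb : c - b ≤ δ) (hδ : 0 ≤ δ)
    (hδη : δ < η) : (c + η) / (b + η) ≤ η / (η - δ) := by
  rw [div_le_div_iff₀ (by linarith) (by linarith)]
  nlinarith [mul_nonneg hδ (add_nonneg hb hδ)]

theorem stmt_16_general {X : Type*}
    (J Jε Jπ : X → ℝ) (β η L ε : ℝ)
    (hβ : 0 < β) (hLε : 0 < L * ε) (hηLε : L * ε < η)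
    (hJnn : ∀ x, 0 ≤ J x)
    (hJεgap : ∀ x, Jε x - J x ≤ L * ε)
    (hrel : ∀ x, Jπ x + η ≤ (1 + β) * (Jε x + η)) :
    ∀ x, (Jπ x - J x) / (J x + η) ≤ (β * η + L * ε) / (η - L * ε) := by
  intro x
  have hJη : 0 < J x + η := by linarith [hJnn x]
  have hgap : 0 < η - L * ε := sub_pos.mpr hηLε
  calc (Jπ x - J x) / (J x + η) = (Jπ x + η) / (J x + η) - 1 := by
        field_simp; ring
    _ ≤ (1 + β) * ((Jε x + η) / (J x + η)) - 1 := by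
        rw [← mul_div_assoc]; gcongr; exact hrel x
    _ ≤ (1 + β) * (η / (η - L * ε)) - 1 := by
        have hratio := add_div_add_le_div_sub (hJnn x) (hJεgap x) hLε.le hηLε
        exact sub_le_sub_right (mul_le_mul_of_nonneg_left hratio (by linarith)) 1
    _ = (β * η + L * ε) / (η - L * ε) := by
        field_simp; ring

/-- Transfer of the relative performance bound from the conservative problem
to the original problem. -/
theorem stmt_16 {X : Type*}
    (J Jε Jπ : X → ℝ) (β η L ε : ℝ)
    (hβ : 0 < β) (hη : 0 < η) (hLε : 0 < L * ε) (hηLε : L * ε < η)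
    (hJnn : ∀ x, 0 ≤ J x) (hJπnn : ∀ x, 0 ≤ Jπ x)
    (hJε : ∀ x, J x ≤ Jε x)
    (hJεgap : ∀ x, Jε x - J x ≤ L * ε)
    (hrel : ∀ x, Jπ x + η ≤ (1 + β) * (Jε x + η)) :
    ∀ x, (Jπ x - J x) / (J x + η) ≤ (β * η + L * ε) / (η - L * ε) :=
  stmt_16_general J Jε Jπ β η L ε hβ hLε hηLε hJnn hJεgap hrel
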